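/- Suppose Y and Z are closed subspaces of a Banach space X, and there is a collection Λ of bounded linear operators on X such that: (i) every φ ∈ Λ maps X into Y; (ii) every φ ∈ Λ maps Z into Z; (iii) sup{‖φ‖ : φ ∈ Λ} < ∞; (iv) for every y ∈ Y and ε > 0 there is φ ∈ Λ with ‖y − φy‖ < ε. Then Y + Z is a closed subspace of X. -/
import Mathlib


open Filter Topology Pointwise

theorem stmt_14
    {X : Type*} [NormedAddCommGroup X] [NormedSpace ℂ X] [CompleteSpace X]
    (Y Z : Submodule ℂ X) (hY : IsClosed (Y : Set X)) (hZ : IsClosed (Z : Set X))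
    (Λ : Set (X →L[ℂ] X))
    (h1 : ∀ φ ∈ Λ, ∀ x : X, φ x ∈ Y)
    (h2 : ∀ φ ∈ Λ, ∀ z ∈ Z, φ z ∈ Z)
    (h3 : ∃ C : ℝ, ∀ φ ∈ Λ, ‖φ‖ ≤ C)
    (h4 : ∀ y ∈ Y, ∀ ε > (0 : ℝ), ∃ φ ∈ Λ, ‖y - φ y‖ < ε) :
    IsClosed ((Y : Set X) + (Z : Set X)) := by
  obtain ⟨C, hC⟩ := h3
  set c : ℝ := max C 0 + 2 with hc
  have hc0 : (0:ℝ) < c := by positivity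
  set S : Set X := (Y : Set X) + (Z : Set X) with hS
  -- key decomposition lemma
  have decomp : ∀ v ∈ S, ∃ y ∈ Y, ∃ z ∈ Z, y + z = v ∧ ‖y‖ ≤ c * ‖v‖ ∧ ‖z‖ ≤ c * ‖v‖ := by
    intro v hv
    rcases Set.mem_add.mp hv with ⟨y, hy, z, hz, hyz⟩
    by_cases hv0 : v = 0
    · refine ⟨0, Y.zero_mem, 0, Z.zero_mem, by simp [hv0], by simp only [norm_zero]; positivity, by simp only [norm_zero]; positivity⟩
    · have hvpos : (0:ℝ) < ‖v‖ := norm_pos_iff.mpr hv0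
      obtain ⟨φ, hφΛ, hφy⟩ := h4 y hy ‖v‖ hvpos
      refine ⟨φ v + (y - φ y), Y.add_mem (h1 φ hφΛ v) (Y.sub_mem hy (h1 φ hφΛ y)),
        z - φ z, Z.sub_mem hz (h2 φ hφΛ z hz), ?_, ?_, ?_⟩
      · have : φ v = φ y + φ z := by rw [← hyz] at *; simp [map_add]
        rw [this, ← hyz]; abel
      · have h1' : ‖φ v‖ ≤ C * ‖v‖ := φ.le_of_opNorm_le (hC φ hφΛ) v
        have : ‖φ v + (y - φ y)‖ ≤ ‖φ v‖ + ‖y - φ y‖ := norm_add_le _ _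
        have hCle : C ≤ max C 0 := le_max_left _ _
        nlinarith [norm_nonneg v, le_of_lt hφy]
      · have h1' : ‖φ v‖ ≤ C * ‖v‖ := φ.le_of_opNorm_le (hC φ hφΛ) v
        have heq : z - φ z = v - (φ v + (y - φ y)) := by
          have : φ v = φ y + φ z := by rw [← hyz] at *; simp [map_add]
          rw [this, ← hyz]; abel
        rw [heq]
        have : ‖v - (φ v + (y - φ y))‖ ≤ ‖v‖ + (‖φ v‖ + ‖y - φ y‖) := by
          calc ‖v - (φ v + (y - φ y))‖ ≤ ‖v‖ + ‖φ v + (y - φ y)‖ := norm_sub_le _ _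
            _ ≤ ‖v‖ + (‖φ v‖ + ‖y - φ y‖) := by gcongr; exact norm_add_le _ _
        have hCle : C ≤ max C 0 := le_max_left _ _
        nlinarith [norm_nonneg v, le_of_lt hφy]
  -- S equals the coe of the submodule Y ⊔ Z, hence closed under subtraction/addition
  have hSsub : S = ((Y ⊔ Z : Submodule ℂ X) : Set X) := (Submodule.coe_sup Y Z).symm
  apply isClosed_of_closure_subset
  intro x hx
  have hu : ∀ n : ℕ, ∃ u ∈ S, dist x u < (1/2 : ℝ)^n := by
    intro n
    exact Metric.mem_closure_iff.mp hx _ (by positivity)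
  choose u huS hud using hu
  -- telescoping differences
  set d : ℕ → X := fun n => u (n+1) - u n with hd
  have hdS : ∀ n, d n ∈ S := by
    intro n
    have h1' := huS (n+1); have h2' := huS n
    rw [hSsub] at h1' h2' ⊢
    exact Submodule.sub_mem _ h1' h2'
  have hdnorm : ∀ n, ‖d n‖ ≤ 2 * (1/2:ℝ)^n := by
    intro n
    have : d n = (u (n+1) - x) + (x - u n) := by rw [hd]; abel
    rw [this]
    calc ‖(u (n+1) - x) + (x - u n)‖ ≤ ‖u (n+1) - x‖ + ‖x - u n‖ := norm_add_le _ _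
      _ ≤ (1/2:ℝ)^(n+1) + (1/2:ℝ)^n := by
          apply add_le_add
          · rw [← dist_eq_norm, dist_comm]; exact le_of_lt (hud (n+1))
          · rw [← dist_eq_norm]; exact le_of_lt (hud n)
      _ ≤ 2 * (1/2:ℝ)^n := by
          have : (1/2:ℝ)^(n+1) ≤ (1/2:ℝ)^n := by
            apply pow_le_pow_of_le_one <;> norm_num
          linarith
  choose ys hysY zs hzsZ hyzs hysn hzsn using fun n => decomp (d n) (hdS n)
  have hgeo : Summable (fun n : ℕ => (2*c) * (1/2:ℝ)^n) :=
    (summable_geometric_of_lt_one (by norm_num) (by norm_num)).mul_left _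
  have hbnd : ∀ n, ‖ys n‖ ≤ (2*c) * (1/2:ℝ)^n := by
    intro n
    calc ‖ys n‖ ≤ c * ‖d n‖ := hysn n
      _ ≤ c * (2 * (1/2:ℝ)^n) := mul_le_mul_of_nonneg_left (hdnorm n) hc0.le
      _ = (2*c) * (1/2:ℝ)^n := by ring
  have hbndz : ∀ n, ‖zs n‖ ≤ (2*c) * (1/2:ℝ)^n := by
    intro n
    calc ‖zs n‖ ≤ c * ‖d n‖ := hzsn n
      _ ≤ c * (2 * (1/2:ℝ)^n) := mul_le_mul_of_nonneg_left (hdnorm n) hc0.le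
      _ = (2*c) * (1/2:ℝ)^n := by ring
  have hys_sum : Summable ys :=
    Summable.of_norm (hgeo.of_nonneg_of_le (fun n => norm_nonneg _) hbnd)
  have hzs_sum : Summable zs :=
    Summable.of_norm (hgeo.of_nonneg_of_le (fun n => norm_nonneg _) hbndz)
  set Ys : X := ∑' n, ys n with hYs
  set Zs : X := ∑' n, zs n with hZs
  have htyY : Tendsto (fun n => ∑ i ∈ Finset.range n, ys i) atTop (𝓝 Ys) :=
    hys_sum.hasSum.tendsto_sum_nat
  have htzZ : Tendsto (fun n => ∑ i ∈ Finset.range n, zs i) atTop (𝓝 Zs) :=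
    hzs_sum.hasSum.tendsto_sum_nat
  have hYsmem : Ys ∈ Y :=
    hY.mem_of_tendsto htyY (Filter.Eventually.of_forall fun n =>
      Y.sum_mem fun i _ => hysY i)
  have hZsmem : Zs ∈ Z :=
    hZ.mem_of_tendsto htzZ (Filter.Eventually.of_forall fun n =>
      Z.sum_mem fun i _ => hzsZ i)
  -- u n tends to x
  have hux : Tendsto u atTop (𝓝 x) := by
    rw [tendsto_iff_dist_tendsto_zero]
    apply squeeze_zero (fun n => dist_nonneg) (fun n => le_of_lt (by
      rw [dist_comm]; exact hud n))
    exact tendsto_pow_atTop_nhds_zero_of_lt_one (by norm_num) (by norm_num)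
  -- partial sums of d telescope
  have hpart : ∀ n, ∑ i ∈ Finset.range n, d i = u n - u 0 := by
    intro n; exact Finset.sum_range_sub u n
  have hsum_d : Tendsto (fun n => ∑ i ∈ Finset.range n, d i) atTop (𝓝 (x - u 0)) := by
    simp only [hpart]
    exact hux.sub tendsto_const_nhds
  have hsum_d' : Tendsto (fun n => ∑ i ∈ Finset.range n, d i) atTop (𝓝 (Ys + Zs)) := by
    have : ∀ n, ∑ i ∈ Finset.range n, d i
        = (∑ i ∈ Finset.range n, ys i) + (∑ i ∈ Finset.range n, zs i) := by
      intro n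
      rw [← Finset.sum_add_distrib]
      exact Finset.sum_congr rfl fun i _ => (hyzs i).symm
    simp only [this]
    exact htyY.add htzZ
  have hxeq : x - u 0 = Ys + Zs := tendsto_nhds_unique hsum_d hsum_d'
  rcases Set.mem_add.mp (huS 0) with ⟨y0, hy0, z0, hz0, h0⟩
  have : x = (y0 + Ys) + (z0 + Zs) := by
    have : x = u 0 + (Ys + Zs) := by rw [← hxeq]; abel
    rw [this, ← h0]; abel
  rw [hS]
  exact Set.mem_add.mpr ⟨y0 + Ys, Y.add_mem hy0 hYsmem, z0 + Zs, Z.add_mem hz0 hZsmem,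
    this.symm⟩
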